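/- arXiv:2512.06270 — 2 statements merged into one kernel-verified Lean document; each statement's English description precedes it below -/
import Mathlib

section
/- Let X ⊂ ℝ^d, {x₁,…,x_n} ⊂ X with fill distance h_n = sup_{y∈X} min_i ‖y − xᵢ‖, and let x ∈ X be such that the closed ball B(x, r − h_n) is contained in X, where r > h_n. Then N(x, r) := #{i : ‖xᵢ − x‖ ≤ r} ≥ (r/h_n − 1)^d. -/
open scoped Classical

/-- Covering lower bound: if the design `{xᵢ} ⊂ X` has fill distance at most `hₙ`
(every point of `X` is within `hₙ` of some design point), `hₙ < r`, and the closed ball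
`B(x, r - hₙ)` is contained in `X`, then the number of design points within distance `r`
of `x` is at least `(r/hₙ - 1)^d`. -/
theorem stmt8 (d n : ℕ) (X : Set (EuclideanSpace ℝ (Fin d)))
    (xs : Fin n → EuclideanSpace ℝ (Fin d)) (hxs : ∀ i, xs i ∈ X)
    (hn r : ℝ) (hh : 0 < hn) (hrh : hn < r)
    (hfill : ∀ y ∈ X, ∃ i, ‖y - xs i‖ ≤ hn)
    (x : EuclideanSpace ℝ (Fin d)) (hx : x ∈ X)
    (hball : Metric.closedBall x (r - hn) ⊆ X) :
    (r / hn - 1) ^ d ≤ ((Finset.univ.filter (fun i => ‖xs i - x‖ ≤ r)).card : ℝ) := by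
  classical
  set S := Finset.univ.filter (fun i => ‖xs i - x‖ ≤ r) with hS
  have hrh' : (0:ℝ) ≤ r - hn := by linarith
  have hcover : Metric.closedBall x (r - hn) ⊆ ⋃ i ∈ S, Metric.closedBall (xs i) hn := by
    intro y hy
    obtain ⟨i, hi⟩ := hfill y (hball hy)
    have hdist : dist y (xs i) ≤ hn := by rwa [dist_eq_norm]
    have hiS : i ∈ S := by
      simp only [hS, Finset.mem_filter, Finset.mem_univ, true_and]
      have h1 : dist (xs i) x ≤ dist (xs i) y + dist y x := dist_triangle _ _ _
      have h2 : dist y x ≤ r - hn := Metric.mem_closedBall.1 hy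
      have h3 : dist (xs i) y ≤ hn := by rwa [dist_comm]
      have : dist (xs i) x ≤ r := by linarith
      rwa [dist_eq_norm] at this
    exact Set.mem_biUnion hiS (Metric.mem_closedBall.2 (by rwa [dist_comm] at hdist))
  have hfd : Module.finrank ℝ (EuclideanSpace ℝ (Fin d)) = d := finrank_euclideanSpace_fin
  set V := MeasureTheory.volume (Metric.ball (0:EuclideanSpace ℝ (Fin d)) 1) with hV
  have hV0 : V ≠ 0 := (Metric.measure_ball_pos _ _ one_pos).ne'
  have hVtop : V ≠ ⊤ := MeasureTheory.measure_ball_lt_top.ne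
  have hvol :
      ENNReal.ofReal ((r - hn) ^ d) * V ≤ (S.card : ENNReal) * (ENNReal.ofReal (hn ^ d) * V) := by
    have h1 : MeasureTheory.volume (Metric.closedBall x (r - hn)) ≤
        ∑ i ∈ S, MeasureTheory.volume (Metric.closedBall (xs i) hn) :=
      (MeasureTheory.measure_mono hcover).trans
        (MeasureTheory.measure_biUnion_finset_le S _)
    rw [MeasureTheory.Measure.addHaar_closedBall _ x hrh', hfd] at h1
    calc ENNReal.ofReal ((r - hn) ^ d) * V ≤ ∑ i ∈ S, MeasureTheory.volume (Metric.closedBall (xs i) hn) := h1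
      _ = ∑ i ∈ S, ENNReal.ofReal (hn ^ d) * V := by
          refine Finset.sum_congr rfl fun i _ => ?_
          rw [MeasureTheory.Measure.addHaar_closedBall _ _ hh.le, hfd]
      _ = (S.card : ENNReal) * (ENNReal.ofReal (hn ^ d) * V) := by
          rw [Finset.sum_const, nsmul_eq_mul]
  have hvol2 : ENNReal.ofReal ((r - hn) ^ d) ≤ (S.card : ENNReal) * ENNReal.ofReal (hn ^ d) := by
    rw [← mul_assoc] at hvol
    exact (ENNReal.mul_le_mul_iff_left hV0 hVtop).mp hvol
  have hreal : (r - hn) ^ d ≤ (S.card : ℝ) * hn ^ d := by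
    have := hvol2
    rw [← ENNReal.ofReal_natCast, ← ENNReal.ofReal_mul (by positivity)] at this
    have h := ENNReal.ofReal_le_ofReal_iff (by positivity : (0:ℝ) ≤ (S.card : ℝ) * hn ^ d) |>.mp this
    exact h
  have hpow : (r / hn - 1) ^ d = (r - hn) ^ d / hn ^ d := by
    rw [div_sub_one hh.ne', div_pow]
  rw [hpow, div_le_iff₀ (by positivity : (0:ℝ) < hn ^ d)]
  exact hreal
end

section
/- Fix d ≥ 1 and a budget Γ ≥ 1. Consider minimizing r(k,n,T) = (k/n)^{2/d} + 1/T² + 1/(kT) over positive reals subject to nT = Γ. Then the infimum of r is attained (up to constant factors) at the order Γ^{-2/(d+2)}; in particular r(k,n,T) ≥ c·Γ^{-2/(d+2)} for some constant c > 0 depending only on d, and choosing kT = Γ^{2/(d+2)}, n = Γ^{d/(d+2)}·k with T ≥ k achieves r ≤ C·Γ^{-2/(d+2)}. -/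
/-- kNN budget-allocation tradeoff: for `r(k,n,T) = (k/n)^{2/d} + 1/T² + 1/(kT)` under the
budget constraint `nT = Γ`, there are constants `c, C > 0` (depending only on `d`) such
that `r ≥ c·Γ^{-2/(d+2)}` always, while choosing `kT = Γ^{2/(d+2)}`,
`n = Γ^{d/(d+2)}·k` with `T ≥ k` achieves `r ≤ C·Γ^{-2/(d+2)}`. -/
theorem stmt15 (d : ℕ) (hd : 1 ≤ d) :
    ∃ c > (0 : ℝ), ∃ C > (0 : ℝ), ∀ Γ : ℝ, 1 ≤ Γ →
      (∀ k n T : ℝ, 0 < k → 0 < n → 0 < T → n * T = Γ →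
        c * Γ ^ (-(2 : ℝ) / (d + 2)) ≤ (k / n) ^ ((2 : ℝ) / d) + 1 / T ^ 2 + 1 / (k * T)) ∧
      (∀ k n T : ℝ, 0 < k → 0 < n → 0 < T →
        k * T = Γ ^ ((2 : ℝ) / (d + 2)) → n = Γ ^ ((d : ℝ) / (d + 2)) * k → k ≤ T →
        (k / n) ^ ((2 : ℝ) / d) + 1 / T ^ 2 + 1 / (k * T) ≤ C * Γ ^ (-(2 : ℝ) / (d + 2))) := by
  refine ⟨1, one_pos, 3, by norm_num, fun Γ hΓ => ?_⟩
  have hΓ0 : (0 : ℝ) < Γ := lt_of_lt_of_le one_pos hΓ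
  have hd0 : (0 : ℝ) < (d : ℝ) := by exact_mod_cast Nat.lt_of_lt_of_le Nat.zero_lt_one hd
  have hd2 : (0 : ℝ) < (d : ℝ) + 2 := by positivity
  have hexp : (-(2 : ℝ) / (d + 2)) = (-(d : ℝ) / (d + 2)) * (2 / d) := by
    field_simp
  have hkey : Γ ^ (-(2 : ℝ) / (d + 2)) = (Γ ^ (-(d : ℝ) / (d + 2))) ^ ((2 : ℝ) / d) := by
    rw [← Real.rpow_mul hΓ0.le, ← hexp]
  have hneg : Γ ^ (-(2 : ℝ) / (d + 2)) = (Γ ^ ((2 : ℝ) / (d + 2)))⁻¹ := by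
    rw [← Real.rpow_neg hΓ0.le, neg_div]
  constructor
  · intro k n T hk hn hT hbud
    rw [one_mul]
    by_cases hc : Γ ^ (-(2 : ℝ) / (d + 2)) ≤ 1 / (k * T)
    · have h1 : 0 ≤ (k / n) ^ ((2 : ℝ) / d) := Real.rpow_nonneg (by positivity) _
      have h2 : 0 ≤ 1 / T ^ 2 := by positivity
      linarith
    · push_neg at hc
      rw [hneg, one_div] at hc
      have hkT : Γ ^ ((2 : ℝ) / (d + 2)) < k * T := by
        rwa [inv_lt_inv₀ (by positivity) (by positivity)] at hc
      have hkn : Γ ^ (-(d : ℝ) / (d + 2)) ≤ k / n := by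
        have h1 : Γ ^ (-(d : ℝ) / (d + 2)) = Γ ^ ((2 : ℝ) / (d + 2)) / Γ := by
          rw [show (-(d : ℝ) / (d + 2)) = (2 : ℝ) / (d + 2) - 1 by field_simp; ring,
            Real.rpow_sub hΓ0, Real.rpow_one]
        have h2 : k / n = (k * T) / Γ := by
          rw [← hbud]; field_simp
        rw [h1, h2]
        gcongr
      have hmain : Γ ^ (-(2 : ℝ) / (d + 2)) ≤ (k / n) ^ ((2 : ℝ) / d) := by
        rw [hkey]
        exact Real.rpow_le_rpow (Real.rpow_nonneg hΓ0.le _) hkn (by positivity)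
      have h2 : 0 ≤ 1 / T ^ 2 := by positivity
      have h3 : 0 ≤ 1 / (k * T) := by positivity
      linarith
  · intro k n T hk hn hT hkT hn' hkle
    have h1 : (k / n) ^ ((2 : ℝ) / d) = Γ ^ (-(2 : ℝ) / (d + 2)) := by
      have hkn : k / n = Γ ^ (-(d : ℝ) / (d + 2)) := by
        rw [hn', neg_div, Real.rpow_neg hΓ0.le]
        field_simp
      rw [hkn, hkey]
    have h3 : 1 / (k * T) = Γ ^ (-(2 : ℝ) / (d + 2)) := by
      rw [hkT, hneg, one_div]
    have h2 : 1 / T ^ 2 ≤ 1 / (k * T) := by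
      apply one_div_le_one_div_of_le (by positivity)
      nlinarith
    linarith [h1.le, h3.le]
end
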